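/- Every indecomposable noncrossing nonnesting partition of {1,...,n} (n ≥ 2) consists of exactly one block of size j ≥ 2 containing both 1 and n, together with n - j singleton blocks; consequently there are exactly 2^{n-2} such partitions. -/

import Mathlib

/-- `i` and `j` lie in the same block of the set partition `P`. -/
def SameBlock {n : ℕ} (P : Finpartition (Finset.univ : Finset (Fin n)))
    (i j : Fin n) : Prop :=
  ∃ b ∈ P.parts, i ∈ b ∧ j ∈ b

/-- `(i, j)` is an arc of the arc diagram of `P`: `i < j` are in the same block
and no element strictly between them lies in that block. -/
def IsArc {n : ℕ} (P : Finpartition (Finset.univ : Finset (Fin n)))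
    (i j : Fin n) : Prop :=
  i < j ∧ SameBlock P i j ∧ ∀ m : Fin n, i < m → m < j → ¬ SameBlock P i m

/-- `P` is noncrossing: no two arcs `(i₁,j₁)`, `(i₂,j₂)` with `i₁<i₂<j₁<j₂`. -/
def Noncrossing {n : ℕ} (P : Finpartition (Finset.univ : Finset (Fin n))) : Prop :=
  ¬ ∃ i₁ j₁ i₂ j₂ : Fin n, IsArc P i₁ j₁ ∧ IsArc P i₂ j₂ ∧
      i₁ < i₂ ∧ i₂ < j₁ ∧ j₁ < j₂

/-- `P` is nonnesting: no two arcs `(i₁,j₁)`, `(i₂,j₂)` with `i₁<i₂<j₂<j₁`. -/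
def Nonnesting {n : ℕ} (P : Finpartition (Finset.univ : Finset (Fin n))) : Prop :=
  ¬ ∃ i₁ j₁ i₂ j₂ : Fin n, IsArc P i₁ j₁ ∧ IsArc P i₂ j₂ ∧
      i₁ < i₂ ∧ i₂ < j₂ ∧ j₂ < j₁

/-- `P` is indecomposable: no proper nonempty subcollection of its blocks forms
a partition of an initial segment `{1,...,k}` with `k < n`. -/
def IndecomposableP {n : ℕ} (P : Finpartition (Finset.univ : Finset (Fin n))) : Prop :=
  ¬ ∃ k : ℕ, 0 < k ∧ k < n ∧
      ∀ b ∈ P.parts, (∀ i ∈ b, (i : ℕ) < k) ∨ (∀ i ∈ b, k ≤ (i : ℕ))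

/-!
Together, noncrossing and nonnesting say exactly that arcs do not overlap: an arc starting after
`i₁` starts at or after the end of the arc starting at `i₁`. Indecomposability says that every gap
between consecutive points is spanned by an arc. If the left end `i` of an arc is not the first
point, the arc spanning the gap just before `i` cannot overlap it, so it ends at `i`; by induction
on `i`, every arc lies in the block of the first point. That block therefore contains the last
point, and every other block is a singleton. Conversely every partition of this shape is
noncrossing, nonnesting and indecomposable, so these partitions correspond to the subsets of the
`n - 2` inner points.
-/

open Finset

namespace Finpartition

variable {α : Type*} [DecidableEq α]

lemma parts_eq_image_part {s : Finset α} (P : Finpartition s) : P.parts = s.image P.part := by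
  ext t
  constructor
  · intro ht
    obtain ⟨a, ha, rfl⟩ := P.part_surjOn ht
    exact mem_image_of_mem _ ha
  · rw [mem_image]
    rintro ⟨a, ha, rfl⟩
    exact P.part_mem.2 ha

lemma ext_part {s : Finset α} {P Q : Finpartition s} (h : ∀ a, P.part a = Q.part a) : P = Q := by
  ext1
  rw [P.parts_eq_image_part, Q.parts_eq_image_part, funext h]

variable [Fintype α]

def blockSetoid (B : Finset α) : Setoid α := Setoid.ker fun a => if a ∈ B then none else some a

instance (B : Finset α) : DecidableRel (blockSetoid B) :=
  fun _ _ => decidable_of_iff _ Setoid.ker_def.symm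

def ofBlock (B : Finset α) : Finpartition (univ : Finset α) := ofSetoid (blockSetoid B)

variable {B : Finset α} {a b : α}

lemma mem_part_ofBlock : b ∈ (ofBlock B).part a ↔ a = b ∨ a ∈ B ∧ b ∈ B := by
  rw [ofBlock, mem_part_ofSetoid_iff_rel, blockSetoid, Setoid.ker_def]
  split_ifs <;> grind

lemma part_ofBlock_of_mem (ha : a ∈ B) : (ofBlock B).part a = B := by
  ext b
  rw [mem_part_ofBlock]
  constructor
  · rintro (rfl | ⟨-, hb⟩) <;> assumption
  · exact fun hb => Or.inr ⟨ha, hb⟩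

end Finpartition

variable {n : ℕ} {P : Finpartition (univ : Finset (Fin n))}

lemma sameBlock_iff_mem_part {i j : Fin n} : SameBlock P i j ↔ j ∈ P.part i := by
  rw [P.mem_part_iff_exists, SameBlock]
  simp only [and_comm]

def ArcsNonoverlapping (P : Finpartition (univ : Finset (Fin n))) : Prop :=
  ∀ ⦃i₁ j₁ i₂ j₂ : Fin n⦄, IsArc P i₁ j₁ → IsArc P i₂ j₂ → i₁ < i₂ → j₁ ≤ i₂

lemma noncrossing_and_nonnesting_iff :
    Noncrossing P ∧ Nonnesting P ↔ ArcsNonoverlapping P := by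
  constructor
  · rintro ⟨hnc, hnn⟩ i₁ j₁ i₂ j₂ h₁ h₂ h₁₂
    by_contra! h
    rcases lt_trichotomy j₁ j₂ with hlt | rfl | hgt
    · exact hnc ⟨i₁, j₁, i₂, j₂, h₁, h₂, h₁₂, h, hlt⟩
    · obtain ⟨b, hb, hi₁, hj⟩ := h₁.2.1
      obtain ⟨b', hb', hi₂, hj'⟩ := h₂.2.1
      obtain rfl := P.eq_of_mem_parts hb hb' hj hj'
      exact h₁.2.2 i₂ h₁₂ h ⟨b, hb, hi₁, hi₂⟩
    · exact hnn ⟨i₁, j₁, i₂, j₂, h₁, h₂, h₁₂, h₂.1, hgt⟩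
  · intro h
    constructor
    · rintro ⟨i₁, j₁, i₂, j₂, h₁, h₂, h₁₂, h₂₁, -⟩
      exact (h h₁ h₂ h₁₂).not_gt h₂₁
    · rintro ⟨i₁, j₁, i₂, j₂, h₁, h₂, h₁₂, h₂₂, h₂₁⟩
      exact (h h₁ h₂ h₁₂).not_gt (h₂₂.trans h₂₁)

lemma exists_isArc_of_mem_of_mem {b : Finset (Fin n)} (hb : b ∈ P.parts) {x y k : Fin n}
    (hx : x ∈ b) (hy : y ∈ b) (hxk : x < k) (hky : k ≤ y) :
    ∃ i j, IsArc P i j ∧ i ∈ b ∧ i < k ∧ k ≤ j := by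
  have hL : (b.filter (· < k)).Nonempty := ⟨x, mem_filter.2 ⟨hx, hxk⟩⟩
  have hR : (b.filter (k ≤ ·)).Nonempty := ⟨y, mem_filter.2 ⟨hy, hky⟩⟩
  obtain ⟨hib, hik⟩ := mem_filter.1 ((b.filter (· < k)).max'_mem hL)
  obtain ⟨hjb, hkj⟩ := mem_filter.1 ((b.filter (k ≤ ·)).min'_mem hR)
  refine ⟨_, _, ⟨hik.trans_le hkj, ⟨b, hb, hib, hjb⟩, fun m him hmj hm => ?_⟩, hib, hik, hkj⟩
  rw [sameBlock_iff_mem_part, P.part_eq_of_mem hb hib] at hm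
  rcases lt_or_ge m k with hmk | hkm
  · exact him.not_ge (le_max' _ _ (mem_filter.2 ⟨hm, hmk⟩))
  · exact hmj.not_ge (min'_le _ _ (mem_filter.2 ⟨hm, hkm⟩))

lemma IndecomposableP.exists_isArc [NeZero n] (hP : IndecomposableP P) {k : Fin n}
    (hk : k ≠ 0) : ∃ i j, IsArc P i j ∧ i < k ∧ k ≤ j := by
  by_contra! hno
  refine hP ⟨k, Fin.pos_iff_ne_zero.2 hk, k.isLt, fun b hb => ?_⟩
  by_contra! hsplit
  obtain ⟨⟨y, hyb, hky⟩, ⟨x, hxb, hxk⟩⟩ := hsplit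
  obtain ⟨i, j, hij, -, hik, hkj⟩ := exists_isArc_of_mem_of_mem hb hxb hyb hxk hky
  exact (hno i j hij hik).not_ge hkj

namespace ArcsNonoverlapping

variable [NeZero n] (hP : ArcsNonoverlapping P) (hind : IndecomposableP P)
include hP hind

lemma left_mem_part_zero {i j : Fin n} (h : IsArc P i j) : i ∈ P.part 0 := by
  induction i using WellFoundedLT.induction generalizing j with
  | _ i ih =>
    by_cases hi : i = 0
    · subst hi
      exact P.mem_part (mem_univ 0)
    obtain ⟨i', j', h', hi'i, hij'⟩ := hind.exists_isArc hi
    obtain rfl : j' = i := le_antisymm (hP h' h hi'i) hij'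
    have hZ := P.part_eq_of_mem (P.part_mem.2 (mem_univ 0)) (ih i' hi'i h')
    exact hZ ▸ sameBlock_iff_mem_part.1 h'.2.1

lemma right_mem_part_zero {i j : Fin n} (h : IsArc P i j) : j ∈ P.part 0 := by
  rw [← P.part_eq_of_mem (P.part_mem.2 (mem_univ 0)) (hP.left_mem_part_zero hind h)]
  exact sameBlock_iff_mem_part.1 h.2.1

lemma pair_subset_part_zero {l : Fin n} (hl : IsTop l) : {0, l} ⊆ P.part 0 := by
  refine insert_subset (P.mem_part (mem_univ 0)) (singleton_subset_iff.2 ?_)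
  by_cases hl0 : l = 0
  · subst hl0
    exact P.mem_part (mem_univ 0)
  obtain ⟨i, j, h, -, hlj⟩ := hind.exists_isArc hl0
  exact le_antisymm (hl j) hlj ▸ hP.right_mem_part_zero hind h

lemma eq_part_zero_of_one_lt_card {b : Finset (Fin n)} (hb : b ∈ P.parts) (hcard : 1 < b.card) :
    b = P.part 0 := by
  obtain ⟨x, hx, y, hy, hxy⟩ := one_lt_card.1 hcard
  wlog hlt : x < y generalizing x y
  · exact this y hy x hx hxy.symm (hxy.lt_or_gt.resolve_left hlt)
  obtain ⟨i, j, h, hib, -⟩ := exists_isArc_of_mem_of_mem hb hx hy hlt le_rfl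
  exact P.eq_of_mem_parts hb (P.part_mem.2 (mem_univ 0)) hib (hP.left_mem_part_zero hind h)

lemma card_eq_one_of_ne_part_zero {b : Finset (Fin n)} (hb : b ∈ P.parts) (hne : b ≠ P.part 0) :
    b.card = 1 :=
  (le_of_not_gt (mt (hP.eq_part_zero_of_one_lt_card hind hb) hne)).antisymm
    (card_pos.2 (P.nonempty_of_mem_parts hb))

lemma eq_ofBlock_part_zero : P = Finpartition.ofBlock (P.part 0) := by
  refine Finpartition.ext_part fun a => Finset.ext fun b => ?_
  rw [Finpartition.mem_part_ofBlock]
  constructor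
  · intro hb
    by_cases hab : a = b
    · exact Or.inl hab
    have ha := P.mem_part (mem_univ a)
    have hZ := hP.eq_part_zero_of_one_lt_card hind (P.part_mem.2 (mem_univ a))
      (one_lt_card.2 ⟨a, ha, b, hb, hab⟩)
    rw [hZ] at ha hb
    exact Or.inr ⟨ha, hb⟩
  · rintro (rfl | ⟨ha, hb⟩)
    · exact P.mem_part (mem_univ a)
    · rwa [P.part_eq_of_mem (P.part_mem.2 (mem_univ 0)) ha]

end ArcsNonoverlapping

lemma arcsNonoverlapping_ofBlock (B : Finset (Fin n)) :
    ArcsNonoverlapping (Finpartition.ofBlock B) := by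
  have mem_of_isArc : ∀ {i j}, IsArc (Finpartition.ofBlock B) i j → i ∈ B := fun h =>
    ((Finpartition.mem_part_ofBlock.1 (sameBlock_iff_mem_part.1 h.2.1)).resolve_left h.1.ne).1
  intro i₁ j₁ i₂ j₂ h₁ h₂ h₁₂
  by_contra! h₂₁
  refine h₁.2.2 i₂ h₁₂ h₂₁ (sameBlock_iff_mem_part.2 ?_)
  exact Finpartition.mem_part_ofBlock.2 (Or.inr ⟨mem_of_isArc h₁, mem_of_isArc h₂⟩)

lemma indecomposableP_ofBlock [NeZero n] {B : Finset (Fin n)} {l : Fin n} (hl : IsTop l)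
    (hB : {0, l} ⊆ B) : IndecomposableP (Finpartition.ofBlock B) := by
  rintro ⟨k, hk0, hkn, hsplit⟩
  have h0 : 0 ∈ B := hB (mem_insert_self _ _)
  have hBparts : B ∈ (Finpartition.ofBlock B).parts := by
    simpa only [Finpartition.part_ofBlock_of_mem h0] using
      (Finpartition.ofBlock B).part_mem.2 (mem_univ 0)
  rcases hsplit B hBparts with h | h
  · exact (h l (hB (by simp))).not_ge (hl ⟨k, hkn⟩)
  · exact hk0.not_ge (h 0 h0)

def noncrossingNonnestingIndecomposableEquiv [NeZero n] {l : Fin n} (hl : IsTop l) :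
    {P : Finpartition (univ : Finset (Fin n)) //
        Noncrossing P ∧ Nonnesting P ∧ IndecomposableP P} ≃ Icc ({0, l} : Finset (Fin n)) univ where
  toFun P := ⟨P.1.part 0, mem_Icc.2 ⟨(noncrossing_and_nonnesting_iff.1 ⟨P.2.1, P.2.2.1⟩)
    |>.pair_subset_part_zero P.2.2.2 hl, subset_univ _⟩⟩
  invFun B :=
    have hncnn := noncrossing_and_nonnesting_iff.2 (arcsNonoverlapping_ofBlock B.1)
    ⟨Finpartition.ofBlock B.1, hncnn.1, hncnn.2, indecomposableP_ofBlock hl (mem_Icc.1 B.2).1⟩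
  left_inv P := Subtype.ext ((noncrossing_and_nonnesting_iff.1 ⟨P.2.1, P.2.2.1⟩)
    |>.eq_ofBlock_part_zero P.2.2.2).symm
  right_inv B := Subtype.ext (Finpartition.part_ofBlock_of_mem ((mem_Icc.1 B.2).1 (by simp)))

/-- Every indecomposable noncrossing nonnesting partition of `[n]` (`n ≥ 2`)
has one block of size `≥ 2` containing both `1` and `n`, with all other blocks
singletons; consequently there are exactly `2 ^ (n - 2)` such partitions. -/
theorem stmt_15 (n : ℕ) (hn : 2 ≤ n) :
    (∀ P : Finpartition (Finset.univ : Finset (Fin n)),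
      Noncrossing P → Nonnesting P → IndecomposableP P →
        ∃ b ∈ P.parts, 2 ≤ b.card ∧ (⟨0, by omega⟩ : Fin n) ∈ b ∧
          (⟨n - 1, by omega⟩ : Fin n) ∈ b ∧
          ∀ b' ∈ P.parts, b' ≠ b → b'.card = 1) ∧
    Nat.card {P : Finpartition (Finset.univ : Finset (Fin n)) //
        Noncrossing P ∧ Nonnesting P ∧ IndecomposableP P} = 2 ^ (n - 2) := by
  have : NeZero n := ⟨by omega⟩
  set l : Fin n := ⟨n - 1, by omega⟩
  have hl : IsTop l := fun m => Fin.le_def.2 (by simp only [l]; omega)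
  have hl0 : (0 : Fin n) ≠ l := Fin.ne_of_val_ne (by simp only [l, Fin.val_zero]; omega)
  refine ⟨fun P hnc hnn hind => ?_, ?_⟩
  · have hP := noncrossing_and_nonnesting_iff.1 ⟨hnc, hnn⟩
    have hZ := hP.pair_subset_part_zero hind hl
    exact ⟨P.part 0, P.part_mem.2 (mem_univ 0), card_pair hl0 ▸ card_le_card hZ,
      hZ (mem_insert_self _ _), hZ (by simp), fun b hb => hP.card_eq_one_of_ne_part_zero hind hb⟩
  · rw [Nat.card_congr (noncrossingNonnestingIndecomposableEquiv hl), Nat.card_eq_fintype_card,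
      Fintype.card_coe, card_Icc_finset (subset_univ _), card_univ, Fintype.card_fin,
      card_pair hl0]
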